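/- Let P_i denote the i-th prime number, and for a positive integer s set M_s = ∏_{i=1}^s P_i, A_s = ∏_{i=1}^s P_i/(P_i − 1), and c_s = log(M_s/(2^s A_s)). Then for every integer s ≥ 6 one has c_s > e and (1/2)·log(2^s A_s) < c_s / log c_s. -/

import Mathlib

/-!
Write `P s = ∏_{i<s} (p_i - 1)/2 = M_s/(2^s A_s)` (`halfPredPrimeProd`) and
`Q s = ∏_{i<s} 2 p_i/(p_i - 1) = 2^s A_s` (`twoMulDivPredPrimeProd`), so that the claim reads
`log (Q s) / 2 < f (log (P s))` with `f t = t / log t`. For `s = 6, 7, 8` this is a numerical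
check. Passing from `s` to `s + 1`, the left side grows by `log (2 p_s/(p_s - 1)) / 2 ≤ 3/8`
because `p_s ≥ 23`, while `a = log (P s)` grows by `x = log ((p_s - 1)/2)` to `b = a + x`.
Since `f' t = (log t - 1)/(log t)^2`, `f` grows by at least `x (log a - 1)/(log a log b)`; and
`b ≤ (s + 1) x ≤ x e^x` because `p_s ≥ 2 s + 7`, so `log b ≤ (1 + 1/e) x` and the gain exceeds
`3/8` as soon as `a ≥ 8`.
-/

open Real Finset

/- `n log q = k log 2 + log (q^n / 2^k)`; choosing `2^k ≈ q^n`, the last term is squeezed by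
`1 - 1/y ≤ log y ≤ y - 1`. -/
theorem log_le_of_pow_div_two_pow_le {q v : ℝ} (hq : 0 < q) {n : ℕ} (hn : 0 < n) (k : ℕ)
    (h : k * 0.6931471808 + (q ^ n / 2 ^ k - 1) ≤ n * v) : log q ≤ v := by
  have hlog : n * log q = k * log 2 + log (q ^ n / 2 ^ k) := by
    rw [log_div (by positivity) (by positivity), log_pow, log_pow]; ring
  have := log_le_sub_one_of_pos (show 0 < q ^ n / 2 ^ k by positivity)
  have := mul_le_mul_of_nonneg_left log_two_lt_d9.le k.cast_nonneg
  exact le_of_mul_le_mul_left (a := (n : ℝ)) (by linarith) (by exact_mod_cast hn)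

theorem le_log_of_le_pow_div_two_pow {q v : ℝ} (hq : 0 < q) {n : ℕ} (hn : 0 < n) (k : ℕ)
    (h : n * v ≤ k * 0.6931471803 + (1 - 2 ^ k / q ^ n)) : v ≤ log q := by
  have hlog : n * log q = k * log 2 + log (q ^ n / 2 ^ k) := by
    rw [log_div (by positivity) (by positivity), log_pow, log_pow]; ring
  have := one_sub_inv_le_log_of_pos (show 0 < q ^ n / 2 ^ k by positivity)
  rw [inv_div] at this
  have := mul_le_mul_of_nonneg_left log_two_gt_d9.le k.cast_nonneg
  exact le_of_mul_le_mul_left (a := (n : ℝ)) (by linarith) (by exact_mod_cast hn)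

theorem div_two_lt_div_log_log_of_bounds {q m u lo hi w : ℝ} (hu : log q ≤ u)
    (hlo : lo ≤ log m) (hhi : log m ≤ hi) (hw : log hi ≤ w) (hlo1 : 1 < lo) (h : u / 2 < lo / w) :
    log q / 2 < log m / log (log m) := by
  have hloglog : 0 < log (log m) := log_pos (by linarith)
  have hw' : log (log m) ≤ w := (log_le_log (by linarith) hhi).trans hw
  calc log q / 2 ≤ u / 2 := by linarith
    _ < lo / w := h
    _ ≤ log m / log (log m) := div_le_div₀ (by linarith) hlo hloglog hw'

theorem mul_log_le_mul_log_add_sub {a b : ℝ} (ha : 0 < a) (hb : 0 < b) :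
    a * log b ≤ a * log a + (b - a) := by
  have h := mul_le_mul_of_nonneg_left (log_le_sub_one_of_pos (div_pos hb ha)) ha.le
  rw [log_div hb.ne' ha.ne', mul_sub, mul_sub, mul_div_cancel₀ b ha.ne', mul_one] at h
  linarith

theorem div_log_add_le_div_log {a b : ℝ} (ha : 1 < a) (hb : 1 < b) :
    a / log a + (b - a) * (log a - 1) / (log a * log b) ≤ b / log b := by
  have hla := log_pos ha
  have hlb := log_pos hb
  have hdiff : b / log b - (a / log a + (b - a) * (log a - 1) / (log a * log b)) =
      (a * log a + (b - a) - a * log b) / (log a * log b) := by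
    field_simp
    ring
  have := mul_log_le_mul_log_add_sub (a := a) (b := b) (by linarith) (by linarith)
  rw [← sub_nonneg, hdiff]
  positivity

theorem log_le_div_exp_one {x : ℝ} (hx : 0 < x) : log x ≤ x / exp 1 := by
  rw [le_div_iff₀ (exp_pos 1), mul_comm]
  simpa [exp_log hx] using exp_one_mul_le_exp (x := log x)

theorem div_log_add_le_div_log_add {a x : ℝ} (ha : 8 ≤ a) (hx : 0 < x)
    (hb : log (a + x) ≤ x + log x) :
    a / log a + 3 / 8 ≤ (a + x) / log (a + x) := by
  have hla : 3 * 0.6931471803 ≤ log a := by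
    have := log_le_log (by norm_num) ha
    rw [show (8 : ℝ) = 2 ^ 3 by norm_num, log_pow] at this
    push_cast at this
    linarith [log_two_gt_d9]
  have hlx : log x ≤ 0.368 * x := by
    have := log_le_div_exp_one hx
    rw [div_eq_mul_inv, mul_comm] at this
    have : (exp 1)⁻¹ ≤ 0.368 := by
      rw [inv_le_comm₀ (exp_pos 1) (by norm_num)]
      linarith [exp_one_gt_d9]
    nlinarith
  have hlb : 0 < log (a + x) := log_pos (by linarith)
  have hgain := div_log_add_le_div_log (a := a) (b := a + x) (by linarith) (by linarith)
  rw [add_sub_cancel_left] at hgain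
  suffices 3 / 8 ≤ x * (log a - 1) / (log a * log (a + x)) by linarith
  have hla0 : 0 < log a := by linarith
  rw [le_div_iff₀ (by positivity)]
  nlinarith [mul_le_mul_of_nonneg_left (hb.trans (by linarith : x + log x ≤ 1.368 * x)) hla0.le,
    mul_le_mul_of_nonneg_left hla hx.le]

theorem log_two_mul_div_sub_one_le {p : ℝ} (hp : 23 ≤ p) : log (2 * p / (p - 1)) ≤ 3 / 4 := by
  have hle : 2 * p / (p - 1) ≤ 23 / 11 := by
    rw [div_le_iff₀ (by linarith)]
    linarith
  exact (log_le_log (div_pos (by linarith) (by linarith)) hle).trans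
    (log_le_of_pow_div_two_pow_le (by norm_num) one_pos 1 (by norm_num))

theorem Nat.nth_prime_eq_of_count_eq {n k : ℕ} (hk : k.Prime) (h : Nat.count Nat.Prime k = n) :
    Nat.nth Nat.Prime n = k :=
  h ▸ Nat.nth_count hk

theorem Nat.nth_prime_five_eq_thirteen : Nat.nth Nat.Prime 5 = 13 :=
  Nat.nth_prime_eq_of_count_eq (by norm_num) (by decide)

theorem Nat.nth_prime_six_eq_seventeen : Nat.nth Nat.Prime 6 = 17 :=
  Nat.nth_prime_eq_of_count_eq (by norm_num) (by decide)

theorem Nat.nth_prime_seven_eq_nineteen : Nat.nth Nat.Prime 7 = 19 :=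
  Nat.nth_prime_eq_of_count_eq (by norm_num) (by decide)

theorem Nat.nth_prime_eight_eq_twenty_three : Nat.nth Nat.Prime 8 = 23 :=
  Nat.nth_prime_eq_of_count_eq (by norm_num) (by decide)

theorem Nat.nth_prime_add_two_le_nth_prime_succ {s : ℕ} (hs : 1 ≤ s) :
    Nat.nth Nat.Prime s + 2 ≤ Nat.nth Nat.Prime (s + 1) := by
  have hlt : Nat.nth Nat.Prime s < Nat.nth Nat.Prime (s + 1) :=
    Nat.nth_strictMono Nat.infinite_setOfPred_prime (Nat.lt_succ_self s)
  have h3 : 3 ≤ Nat.nth Nat.Prime s :=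
    Nat.nth_prime_one_eq_three ▸ Nat.nth_monotone Nat.infinite_setOfPred_prime hs
  have hodd := Nat.odd_iff.1 ((Nat.prime_nth_prime s).odd_of_ne_two (by omega))
  have hodd' := Nat.odd_iff.1 ((Nat.prime_nth_prime (s + 1)).odd_of_ne_two (by omega))
  omega

theorem Nat.two_mul_add_seven_le_nth_prime {s : ℕ} (hs : 8 ≤ s) :
    2 * s + 7 ≤ Nat.nth Nat.Prime s := by
  induction s, hs using Nat.le_induction with
  | base => rw [Nat.nth_prime_eight_eq_twenty_three]
  | succ n hn ih => linarith [Nat.nth_prime_add_two_le_nth_prime_succ (by omega : 1 ≤ n)]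

theorem two_le_nth_prime (i : ℕ) : (2 : ℝ) ≤ Nat.nth Nat.Prime i := by
  exact_mod_cast (Nat.prime_nth_prime i).two_le

noncomputable def halfPredPrimeProd (s : ℕ) : ℝ :=
  ∏ i ∈ range s, ((Nat.nth Nat.Prime i : ℝ) - 1) / 2

noncomputable def twoMulDivPredPrimeProd (s : ℕ) : ℝ :=
  ∏ i ∈ range s, 2 * (Nat.nth Nat.Prime i : ℝ) / ((Nat.nth Nat.Prime i : ℝ) - 1)

theorem halfPredPrimeProd_succ (s : ℕ) :
    halfPredPrimeProd (s + 1) = halfPredPrimeProd s * (((Nat.nth Nat.Prime s : ℝ) - 1) / 2) :=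
  prod_range_succ _ s

theorem twoMulDivPredPrimeProd_succ (s : ℕ) :
    twoMulDivPredPrimeProd (s + 1) =
      twoMulDivPredPrimeProd s *
        (2 * (Nat.nth Nat.Prime s : ℝ) / ((Nat.nth Nat.Prime s : ℝ) - 1)) :=
  prod_range_succ _ s

theorem halfPredPrimeProd_pos (s : ℕ) : 0 < halfPredPrimeProd s :=
  prod_pos fun i _ ↦ by linarith [two_le_nth_prime i]

theorem twoMulDivPredPrimeProd_pos (s : ℕ) : 0 < twoMulDivPredPrimeProd s :=
  prod_pos fun i _ ↦ by have := two_le_nth_prime i; exact div_pos (by linarith) (by linarith)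

theorem halfPredPrimeProd_le_of_le {m n : ℕ} (hm : 1 ≤ m) (hmn : m ≤ n) :
    halfPredPrimeProd m ≤ halfPredPrimeProd n := by
  induction n, hmn using Nat.le_induction with
  | base => rfl
  | succ n hmn ih =>
    have h3 : (3 : ℝ) ≤ Nat.nth Nat.Prime n := by
      exact_mod_cast Nat.nth_prime_one_eq_three ▸
        Nat.nth_monotone Nat.infinite_setOfPred_prime (hm.trans hmn)
    rw [halfPredPrimeProd_succ]
    exact ih.trans (le_mul_of_one_le_right (halfPredPrimeProd_pos n).le (by linarith))

theorem log_halfPredPrimeProd_succ_le (s : ℕ) :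
    log (halfPredPrimeProd (s + 1)) ≤ (s + 1) * log (((Nat.nth Nat.Prime s : ℝ) - 1) / 2) := by
  have hle : halfPredPrimeProd (s + 1) ≤ (((Nat.nth Nat.Prime s : ℝ) - 1) / 2) ^ (s + 1) := by
    refine (prod_le_prod (fun i _ ↦ by linarith [two_le_nth_prime i]) fun i hi ↦ ?_).trans_eq
      (by rw [prod_const, card_range])
    have : (Nat.nth Nat.Prime i : ℝ) ≤ Nat.nth Nat.Prime s := by
      exact_mod_cast Nat.nth_monotone Nat.infinite_setOfPred_prime
        (Nat.lt_succ_iff.1 (mem_range.1 hi))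
    linarith
  calc log (halfPredPrimeProd (s + 1))
      ≤ log ((((Nat.nth Nat.Prime s : ℝ) - 1) / 2) ^ (s + 1)) :=
        log_le_log (halfPredPrimeProd_pos _) hle
    _ = (s + 1) * log (((Nat.nth Nat.Prime s : ℝ) - 1) / 2) := by
        rw [log_pow]; push_cast; ring

section SmallValues

open Nat

theorem halfPredPrimeProd_six : halfPredPrimeProd 6 = 90 := by
  simp [halfPredPrimeProd, prod_range_succ, nth_prime_zero_eq_two, nth_prime_one_eq_three,
    nth_prime_two_eq_five, nth_prime_three_eq_seven, nth_prime_four_eq_eleven,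
    nth_prime_five_eq_thirteen]
  norm_num

theorem twoMulDivPredPrimeProd_six : twoMulDivPredPrimeProd 6 = 1001 / 3 := by
  simp [twoMulDivPredPrimeProd, prod_range_succ, nth_prime_zero_eq_two, nth_prime_one_eq_three,
    nth_prime_two_eq_five, nth_prime_three_eq_seven, nth_prime_four_eq_eleven,
    nth_prime_five_eq_thirteen]
  norm_num

theorem halfPredPrimeProd_seven : halfPredPrimeProd 7 = 720 := by
  rw [halfPredPrimeProd_succ, halfPredPrimeProd_six, nth_prime_six_eq_seventeen]; norm_num

theorem twoMulDivPredPrimeProd_seven : twoMulDivPredPrimeProd 7 = 17017 / 24 := by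
  rw [twoMulDivPredPrimeProd_succ, twoMulDivPredPrimeProd_six, nth_prime_six_eq_seventeen]
  norm_num

theorem halfPredPrimeProd_eight : halfPredPrimeProd 8 = 6480 := by
  rw [halfPredPrimeProd_succ, halfPredPrimeProd_seven, nth_prime_seven_eq_nineteen]; norm_num

theorem twoMulDivPredPrimeProd_eight : twoMulDivPredPrimeProd 8 = 323323 / 216 := by
  rw [twoMulDivPredPrimeProd_succ, twoMulDivPredPrimeProd_seven, nth_prime_seven_eq_nineteen]
  norm_num

end SmallValues

theorem le_log_ninety : (4.49 : ℝ) ≤ log 90 :=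
  le_log_of_le_pow_div_two_pow (by norm_num) two_pos 13 (by norm_num)

theorem le_log_6480 : (8.7 : ℝ) ≤ log 6480 :=
  le_log_of_le_pow_div_two_pow (by norm_num) one_pos 13 (by norm_num)

theorem exp_one_lt_log_halfPredPrimeProd {s : ℕ} (hs : 6 ≤ s) :
    exp 1 < log (halfPredPrimeProd s) := by
  have := log_le_log (by norm_num)
    (halfPredPrimeProd_six ▸ halfPredPrimeProd_le_of_le (by norm_num) hs)
  linarith [exp_one_lt_d9, le_log_ninety]

theorem eight_le_log_halfPredPrimeProd {s : ℕ} (hs : 8 ≤ s) :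
    8 ≤ log (halfPredPrimeProd s) := by
  have := log_le_log (by norm_num)
    (halfPredPrimeProd_eight ▸ halfPredPrimeProd_le_of_le (by norm_num) hs)
  linarith [le_log_6480]

theorem log_halfPredPrimeProd_succ (s : ℕ) :
    log (halfPredPrimeProd (s + 1)) =
      log (halfPredPrimeProd s) + log (((Nat.nth Nat.Prime s : ℝ) - 1) / 2) := by
  rw [halfPredPrimeProd_succ,
    log_mul (halfPredPrimeProd_pos s).ne' (by linarith [two_le_nth_prime s])]

theorem log_log_halfPredPrimeProd_succ_le {s : ℕ} (hs : 8 ≤ s) :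
    log (log (halfPredPrimeProd (s + 1))) ≤
      log (((Nat.nth Nat.Prime s : ℝ) - 1) / 2) +
        log (log (((Nat.nth Nat.Prime s : ℝ) - 1) / 2)) := by
  have hp : (2 * s + 7 : ℝ) ≤ Nat.nth Nat.Prime s := by
    exact_mod_cast Nat.two_mul_add_seven_le_nth_prime hs
  set x := log (((Nat.nth Nat.Prime s : ℝ) - 1) / 2)
  have hx : 0 < x := log_pos (by linarith)
  have hs1 : log (s + 1 : ℝ) ≤ x := log_le_log (by positivity) (by linarith)
  calc log (log (halfPredPrimeProd (s + 1))) ≤ log ((s + 1) * x) :=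
        log_le_log (by linarith [eight_le_log_halfPredPrimeProd (show 8 ≤ s + 1 by omega)])
          (log_halfPredPrimeProd_succ_le s)
    _ ≤ x + log x := by rw [log_mul (by positivity) hx.ne']; linarith

theorem log_twoMulDivPredPrimeProd_succ_le {s : ℕ} (hs : 8 ≤ s) :
    log (twoMulDivPredPrimeProd (s + 1)) ≤ log (twoMulDivPredPrimeProd s) + 3 / 4 := by
  have hp : (23 : ℝ) ≤ Nat.nth Nat.Prime s := by
    exact_mod_cast (show 23 ≤ 2 * s + 7 by omega).trans (Nat.two_mul_add_seven_le_nth_prime hs)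
  rw [twoMulDivPredPrimeProd_succ, log_mul (twoMulDivPredPrimeProd_pos s).ne'
    (div_pos (by linarith) (by linarith)).ne']
  linarith [log_two_mul_div_sub_one_le hp]

theorem log_twoMulDivPredPrimeProd_div_two_lt_of_eight_le {s : ℕ} (hs : 8 ≤ s) :
    log (twoMulDivPredPrimeProd s) / 2 <
      log (halfPredPrimeProd s) / log (log (halfPredPrimeProd s)) := by
  induction s, hs using Nat.le_induction with
  | base =>
    rw [halfPredPrimeProd_eight, twoMulDivPredPrimeProd_eight]
    exact div_two_lt_div_log_log_of_bounds (u := 7.4) (hi := 8.8) (w := 2.18)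
      (log_le_of_pow_div_two_pow_le (by norm_num) one_pos 10 (by norm_num)) le_log_6480
      (log_le_of_pow_div_two_pow_le (by norm_num) two_pos 25 (by norm_num))
      (log_le_of_pow_div_two_pow_le (by norm_num) one_pos 3 (by norm_num))
      (by norm_num) (by norm_num)
  | succ s hs ih =>
    have hp : (2 * s + 7 : ℝ) ≤ Nat.nth Nat.Prime s := by
      exact_mod_cast Nat.two_mul_add_seven_le_nth_prime hs
    have hx : 0 < log (((Nat.nth Nat.Prime s : ℝ) - 1) / 2) := log_pos (by linarith)
    have hb := log_log_halfPredPrimeProd_succ_le hs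
    rw [log_halfPredPrimeProd_succ] at hb ⊢
    linarith [log_twoMulDivPredPrimeProd_succ_le hs,
      div_log_add_le_div_log_add (eight_le_log_halfPredPrimeProd hs) hx hb]

theorem log_twoMulDivPredPrimeProd_div_two_lt {s : ℕ} (hs : 6 ≤ s) :
    log (twoMulDivPredPrimeProd s) / 2 <
      log (halfPredPrimeProd s) / log (log (halfPredPrimeProd s)) := by
  obtain rfl | rfl | hs := show s = 6 ∨ s = 7 ∨ 8 ≤ s by omega
  · rw [halfPredPrimeProd_six, twoMulDivPredPrimeProd_six]
    exact div_two_lt_div_log_log_of_bounds (u := 5.82) (hi := 4.51) (w := 1.507)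
      (log_le_of_pow_div_two_pow_le (by norm_num) two_pos 17 (by norm_num)) le_log_ninety
      (log_le_of_pow_div_two_pow_le (by norm_num) two_pos 13 (by norm_num))
      (log_le_of_pow_div_two_pow_le (by norm_num) (by norm_num : 0 < 6) 13 (by norm_num))
      (by norm_num) (by norm_num)
  · rw [halfPredPrimeProd_seven, twoMulDivPredPrimeProd_seven]
    exact div_two_lt_div_log_log_of_bounds (u := 6.6) (lo := 6.5) (hi := 6.6) (w := 1.89)
      (log_le_of_pow_div_two_pow_le (by norm_num) two_pos 19 (by norm_num))
      (le_log_of_le_pow_div_two_pow (by norm_num) one_pos 9 (by norm_num))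
      (log_le_of_pow_div_two_pow_le (by norm_num) two_pos 19 (by norm_num))
      (log_le_of_pow_div_two_pow_le (by norm_num) (by norm_num : 0 < 3) 8 (by norm_num))
      (by norm_num) (by norm_num)
  · exact log_twoMulDivPredPrimeProd_div_two_lt_of_eight_le hs

theorem two_pow_mul_prod_eq_twoMulDivPredPrimeProd (s : ℕ) :
    2 ^ s * ∏ i ∈ range s, ((Nat.nth Nat.Prime i : ℝ) / ((Nat.nth Nat.Prime i : ℝ) - 1)) =
      twoMulDivPredPrimeProd s := by
  simp only [twoMulDivPredPrimeProd, mul_div_assoc, prod_mul_distrib, prod_const, card_range]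

theorem prod_div_two_pow_mul_prod_eq_halfPredPrimeProd (s : ℕ) :
    (∏ i ∈ range s, (Nat.nth Nat.Prime i : ℝ)) / (2 ^ s * ∏ i ∈ range s,
      ((Nat.nth Nat.Prime i : ℝ) / ((Nat.nth Nat.Prime i : ℝ) - 1))) = halfPredPrimeProd s := by
  rw [two_pow_mul_prod_eq_twoMulDivPredPrimeProd, twoMulDivPredPrimeProd, halfPredPrimeProd,
    ← prod_div_distrib]
  refine prod_congr rfl fun i _ ↦ ?_
  have := two_le_nth_prime i
  field_simp

/-- Let `P_i` be the `i`-th prime, `M_s = ∏_{i=1}^s P_i`,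
`A_s = ∏_{i=1}^s P_i/(P_i - 1)` and `c_s = log (M_s / (2^s * A_s))`.
Then for every `s ≥ 6` one has `c_s > e` and
`(1/2) * log (2^s * A_s) < c_s / log c_s`. -/
theorem log_two_pow_mul_A_lt (s : ℕ) (hs : 6 ≤ s) (A M c : ℝ)
    (hA : A = ∏ i ∈ Finset.range s,
        ((Nat.nth Nat.Prime i : ℝ) / ((Nat.nth Nat.Prime i : ℝ) - 1)))
    (hM : M = ∏ i ∈ Finset.range s, (Nat.nth Nat.Prime i : ℝ))
    (hc : c = Real.log (M / (2 ^ s * A))) :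
    Real.exp 1 < c ∧ (1 / 2) * Real.log (2 ^ s * A) < c / Real.log c := by
  subst hA hM hc
  rw [prod_div_two_pow_mul_prod_eq_halfPredPrimeProd, two_pow_mul_prod_eq_twoMulDivPredPrimeProd,
    one_div_mul_eq_div]
  exact ⟨exp_one_lt_log_halfPredPrimeProd hs, log_twoMulDivPredPrimeProd_div_two_lt hs⟩
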